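/- For every real number s > 1 and every odd positive integer a, there are infinitely many positive integers n such that σ_s(an+2) < σ_s((a+1)n+1). -/

import Mathlib

open Finset

/-- The generalized sum-of-divisors function `σ_s(n) = ∑_{d ∣ n} d^s` for a real exponent `s`. -/
noncomputable def sigmaR (s : ℝ) (n : ℕ) : ℝ := ∑ d ∈ n.divisors, (d : ℝ) ^ s

/-! By Dirichlet's theorem `an + 2` is a prime `p` for infinitely many `n`, since `a` is odd.
Then `σ_s(an+2) = 1 + p^s`, while `m = (a+1)n+1` exceeds `p` as soon as `n ≥ 2`, so
`σ_s(m) ≥ 1 + m^s > 1 + p^s` because `s > 0`. -/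

theorem Nat.infinite_setOf_prime_mul_add {q b : ℕ} (hq : q ≠ 0) (h : b.Coprime q) :
    {n : ℕ | (q * n + b).Prime}.Infinite := by
  refine Set.infinite_of_forall_exists_gt fun N => ?_
  obtain ⟨p, hpN, hp, hmod⟩ := Nat.forall_exists_prime_gt_and_modEq (q * N + b) hq h
  obtain ⟨n, hn⟩ := (Nat.modEq_iff_dvd' (by omega)).mp hmod.symm
  have hpn : q * n + b = p := by omega
  exact ⟨n, by rwa [Set.mem_ofPred_eq, hpn], Nat.lt_of_mul_lt_mul_left (a := q) (by omega)⟩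

lemma sigmaR_prime (s : ℝ) {p : ℕ} (hp : p.Prime) : sigmaR s p = 1 + (p : ℝ) ^ s := by
  rw [sigmaR, hp.divisors, sum_pair hp.one_lt.ne, Nat.cast_one, Real.one_rpow]

lemma one_add_rpow_le_sigmaR (s : ℝ) {m : ℕ} (hm : 2 ≤ m) : 1 + (m : ℝ) ^ s ≤ sigmaR s m := by
  rw [sigmaR, ← Nat.cons_self_properDivisors (by omega), sum_cons, add_comm, add_le_add_iff_left]
  have h1 : 1 ∈ m.properDivisors := Nat.one_mem_properDivisors_iff_one_lt.mpr hm
  simpa using single_le_sum (fun d _ => Real.rpow_nonneg (Nat.cast_nonneg d) s) h1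

lemma sigmaR_prime_lt {s : ℝ} (hs : 0 < s) {p m : ℕ} (hp : p.Prime) (hpm : p < m) :
    sigmaR s p < sigmaR s m := by
  have hp2 := hp.two_le
  calc sigmaR s p = 1 + (p : ℝ) ^ s := sigmaR_prime s hp
    _ < 1 + (m : ℝ) ^ s := by gcongr
    _ ≤ sigmaR s m := one_add_rpow_le_sigmaR s (by omega)

theorem stmt_1_general (s : ℝ) (hs : 1 < s) (a : ℕ) (ha : Odd a) :
    {n : ℕ | 0 < n ∧ sigmaR s (a * n + 2) < sigmaR s ((a + 1) * n + 1)}.Infinite := by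
  have hprimes : {n : ℕ | (a * n + 2).Prime}.Infinite :=
    Nat.infinite_setOf_prime_mul_add ha.pos.ne' (Nat.coprime_two_left.mpr ha)
  refine (hprimes.sdiff (Set.finite_le_nat 1)).mono ?_
  rintro n ⟨hp, hn⟩
  simp only [Set.mem_ofPred_eq, not_le] at hp hn
  refine ⟨by omega, sigmaR_prime_lt (by linarith) hp ?_⟩
  nlinarith

/-- For every real `s > 1` and every odd positive integer `a`, there are infinitely many
positive integers `n` with `σ_s(an+2) < σ_s((a+1)n+1)`. -/
theorem stmt_1 (s : ℝ) (hs : 1 < s) (a : ℕ) (ha : Odd a) (ha0 : 0 < a) :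
    {n : ℕ | 0 < n ∧ sigmaR s (a * n + 2) < sigmaR s ((a + 1) * n + 1)}.Infinite :=
  stmt_1_general s hs a ha
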